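/- Let T : A → B be a linear map between C*-algebras such that T maps every partial isometry of A to a partial isometry of B, A is generated (in norm) by linear combinations of its partial isometries, and T is continuous. Then T sends orthogonal partial isometries to orthogonal partial isometries. -/

import Mathlib

/-!
If `u ⊥ v` then `u + λv` is a partial isometry for every unimodular `λ`, hence so is
`Tu + λTv`. Expanding the triple product of `p + λq` (with `p = Tu`, `q = Tv` partial
isometries) leaves `λ̄ pq*p + (pq*q + qq*p) + λ(pp*q + qp*p) + λ² qp*q = 0` on the unit circle,
so all four coefficients vanish. In a C*-algebra `x x* x = 0` forces `x = 0`, and these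
four identities make `w w* w = 0` both for `w = p*q` and for `w = pq*`.
-/

open ComplexConjugate

def IsPartialIsometry {R : Type*} [Mul R] [Star R] (u : R) : Prop :=
  u * star u * u = u

section StarModule

variable {R : Type*} [NonUnitalRing R] [StarRing R] [Module ℂ R] [StarModule ℂ R]
  [IsScalarTower ℂ R R] [SMulCommClass ℂ R R]

theorem add_smul_mul_star_mul_add_smul (x y : R) {l : ℂ} (hl : ‖l‖ = 1) :
    (x + l • y) * star (x + l • y) * (x + l • y) =
      x * star x * x + l • (y * star y * y) +
        (conj l • (x * star y * x) + (x * star y * y + y * star y * x) +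
          l • (x * star x * y + y * star x * x) + (l * l) • (y * star x * y)) := by
  have hl' : l * conj l = 1 := by simp [Complex.mul_conj', hl]
  simp only [star_add, star_smul, add_mul, mul_add, smul_mul_assoc, mul_smul_comm, smul_smul,
    smul_add, RCLike.star_def, mul_comm (conj l), hl', one_smul]
  abel

theorem IsPartialIsometry.add_smul_of_orthogonal {u v : R} (hu : IsPartialIsometry u)
    (hv : IsPartialIsometry v) (h₁ : star u * v = 0) (h₂ : u * star v = 0) {l : ℂ}
    (hl : ‖l‖ = 1) : IsPartialIsometry (u + l • v) := by
  have h₃ : star v * u = 0 := by simpa using congrArg star h₁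
  have h₄ : v * star u = 0 := by simpa using congrArg star h₂
  unfold IsPartialIsometry at *
  rw [add_smul_mul_star_mul_add_smul u v hl, hu, hv]
  simp [h₂, h₄, mul_assoc, h₁, h₃]

end StarModule

theorem coeffs_eq_zero_of_forall_norm_eq_one {M : Type*} [AddCommGroup M] [Module ℂ M]
    {a b c d : M} (h : ∀ l : ℂ, ‖l‖ = 1 → conj l • a + b + l • c + (l * l) • d = 0) :
    a = 0 ∧ b = 0 ∧ c = 0 ∧ d = 0 := by
  have h1 := h 1 (by simp)
  have h2 := h (-1) (by simp)
  have h3 := h Complex.I (by simp)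
  have h4 := h (-Complex.I) (by simp)
  simp only [map_one, map_neg, Complex.conj_I, neg_neg, one_mul, neg_mul_neg,
    Complex.I_mul_I] at h1 h2 h3 h4
  -- discrete Fourier inversion on the fourth roots of unity
  refine ⟨?_, ?_, ?_, ?_⟩
  · linear_combination (norm := (match_scalars <;> ring_nf <;> simp))
      (4 : ℂ)⁻¹ • (h1 - h2 + Complex.I • h3 - Complex.I • h4)
  · linear_combination (norm := module) (4 : ℂ)⁻¹ • (h1 + h2 + h3 + h4)
  · linear_combination (norm := (match_scalars <;> ring_nf <;> simp))
      (4 : ℂ)⁻¹ • (h1 - h2 - Complex.I • h3 + Complex.I • h4)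
  · linear_combination (norm := module) (4 : ℂ)⁻¹ • (h1 + h2 - h3 - h4)

section CStarRing

variable {R : Type*} [NonUnitalNormedRing R] [StarRing R] [CStarRing R]

theorem CStarRing.eq_zero_of_mul_star_mul_self_eq_zero {x : R} (h : x * star x * x = 0) :
    x = 0 := by
  have hx : star (star x * x) * (star x * x) = 0 := by
    rw [star_mul, star_star, mul_assoc, ← mul_assoc x, h, mul_zero]
  exact CStarRing.star_mul_self_eq_zero_iff x |>.mp <|
    CStarRing.star_mul_self_eq_zero_iff _ |>.mp hx

theorem orthogonal_of_triple_products_eq_zero {p q : R} (ha : p * star q * p = 0)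
    (hb : p * star q * q + q * star q * p = 0) (hc : p * star p * q + q * star p * p = 0)
    (hd : q * star p * q = 0) : star p * q = 0 ∧ p * star q = 0 := by
  have hb₁ : p * star q * q = -(q * star q * p) := eq_neg_of_add_eq_zero_left hb
  have hb₂ : q * star q * p = -(p * star q * q) := eq_neg_of_add_eq_zero_right hb
  have hc' : star p * p * star q = -(star q * p * star p) := by
    simpa [mul_assoc, eq_neg_iff_add_eq_zero, add_comm] using congrArg star hc
  constructor
  · apply CStarRing.eq_zero_of_mul_star_mul_self_eq_zero
    calc star p * q * star (star p * q) * (star p * q)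
        = star p * (q * star q * p) * star p * q := by simp only [star_mul, star_star, mul_assoc]
      _ = -(star p * p * star q * (q * star p * q)) := by rw [hb₂]; noncomm_ring
      _ = 0 := by rw [hd, mul_zero, neg_zero]
  · apply CStarRing.eq_zero_of_mul_star_mul_self_eq_zero
    calc p * star q * star (p * star q) * (p * star q)
        = p * star q * q * (star p * p * star q) := by simp only [star_mul, star_star, mul_assoc]
      _ = q * star q * (p * star q * p) * star p := by rw [hb₁, hc']; noncomm_ring
      _ = 0 := by rw [ha, mul_zero, zero_mul]

end CStarRing

theorem IsPartialIsometry.orthogonal_of_forall_add_smul {R : Type*} [NonUnitalNormedRing R]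
    [StarRing R] [CStarRing R] [Module ℂ R] [StarModule ℂ R] [IsScalarTower ℂ R R]
    [SMulCommClass ℂ R R] {p q : R} (hp : IsPartialIsometry p) (hq : IsPartialIsometry q)
    (h : ∀ l : ℂ, ‖l‖ = 1 → IsPartialIsometry (p + l • q)) :
    star p * q = 0 ∧ p * star q = 0 := by
  have hcross : ∀ l : ℂ, ‖l‖ = 1 →
      conj l • (p * star q * p) + (p * star q * q + q * star q * p) +
        l • (p * star p * q + q * star p * p) + (l * l) • (q * star p * q) = 0 := by
    intro l hl
    have hpq := h l hl
    rw [IsPartialIsometry, add_smul_mul_star_mul_add_smul p q hl, hp, hq] at hpq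
    simpa using hpq
  obtain ⟨ha, hb, hc, hd⟩ := coeffs_eq_zero_of_forall_norm_eq_one hcross
  exact orthogonal_of_triple_products_eq_zero ha hb hc hd

theorem partialIsometry_preserving_maps_orthogonal_general
    {A B : Type*} [NormedRing A] [StarRing A]
    [NormedAlgebra ℂ A] [StarModule ℂ A]
    [NormedRing B] [StarRing B] [CStarRing B]
    [NormedAlgebra ℂ B] [StarModule ℂ B]
    (T : A →L[ℂ] B)
    (hpi : ∀ u : A, u * star u * u = u → T u * star (T u) * T u = T u)
    (u v : A) (hu : u * star u * u = u) (hv : v * star v * v = v)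
    (h1 : star u * v = 0) (h2 : u * star v = 0) :
    star (T u) * T v = 0 ∧ T u * star (T v) = 0 := by
  refine IsPartialIsometry.orthogonal_of_forall_add_smul (hpi u hu) (hpi v hv) fun l hl => ?_
  rw [← map_smul, ← map_add]
  exact hpi _ (IsPartialIsometry.add_smul_of_orthogonal hu hv h1 h2 hl)

/-- A bounded linear map between C*-algebras, sending partial isometries to
partial isometries, on a C*-algebra whose partial isometries span a norm-dense
subspace, maps orthogonal partial isometries to orthogonal partial isometries. -/
theorem partialIsometry_preserving_maps_orthogonal
    {A B : Type*} [NormedRing A] [StarRing A] [CStarRing A]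
    [NormedAlgebra ℂ A] [StarModule ℂ A] [CompleteSpace A]
    [NormedRing B] [StarRing B] [CStarRing B]
    [NormedAlgebra ℂ B] [StarModule ℂ B] [CompleteSpace B]
    (T : A →L[ℂ] B)
    (hpi : ∀ u : A, u * star u * u = u → T u * star (T u) * T u = T u)
    (hgen : closure ((Submodule.span ℂ {a : A | a * star a * a = a} : Submodule ℂ A) : Set A)
      = Set.univ)
    (u v : A) (hu : u * star u * u = u) (hv : v * star v * v = v)
    (h1 : star u * v = 0) (h2 : u * star v = 0) :
    star (T u) * T v = 0 ∧ T u * star (T v) = 0 :=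
  partialIsometry_preserving_maps_orthogonal_general T hpi u v hu hv h1 h2
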